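/- With Tλ1, Tλ2, Tλ3 as defined in the context (the 8×8 monodromy matrices for two lines and a parabola), the two identities Tλ2 · Tλ3 = Tλ3 · Tλ1 and Tλ1 · Tλ3 = Tλ3 · Tλ2 hold over every commutative ring R and for all a, b, c ∈ R. (These are equivalent to the relations Tλ2·Tλ3·Tλ1⁻¹·Tλ3⁻¹ = I and Tλ1·Tλ3·Tλ2⁻¹·Tλ3⁻¹ = I of the fundamental group of the complement of the Landau set for a quadratic touching of two components.) -/
import Mathlib


/-- `M₁ v`: 8×8 matrix with first column `v`, remaining columns standard. -/
def M1 {R : Type*} [CommRing R] (v : Fin 8 → R) : Matrix (Fin 8) (Fin 8) R :=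
  Matrix.of fun i j => if j = 0 then v i else if i = j then 1 else 0

/-- `M₂ v`: 8×8 matrix with second column `v`, remaining columns standard. -/
def M2 {R : Type*} [CommRing R] (v : Fin 8 → R) : Matrix (Fin 8) (Fin 8) R :=
  Matrix.of fun i j => if j = 1 then v i else if i = j then 1 else 0

/-- `M₁₂ v w`: 8×8 matrix with first column `v`, second column `w`,
remaining columns standard. -/
def M12 {R : Type*} [CommRing R] (v w : Fin 8 → R) : Matrix (Fin 8) (Fin 8) R :=
  Matrix.of fun i j => if j = 0 then v i else if j = 1 then w i
    else if i = j then 1 else 0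

lemma vec8_5 {α : Type*} (x0 x1 x2 x3 x4 x5 x6 x7 : α) :
    ![x0,x1,x2,x3,x4,x5,x6,x7] (5 : Fin 8) = x5 := rfl

lemma vec8_6 {α : Type*} (x0 x1 x2 x3 x4 x5 x6 x7 : α) :
    ![x0,x1,x2,x3,x4,x5,x6,x7] (6 : Fin 8) = x6 := rfl

lemma vec8_7 {α : Type*} (x0 x1 x2 x3 x4 x5 x6 x7 : α) :
    ![x0,x1,x2,x3,x4,x5,x6,x7] (7 : Fin 8) = x7 := rfl

set_option maxHeartbeats 1600000 in
/-- the identities `Tλ₂·Tλ₃ = Tλ₃·Tλ₁` and `Tλ₁·Tλ₃ = Tλ₃·Tλ₂`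
for the 8×8 monodromy matrices of two lines and a parabola. -/
theorem stmt8 {R : Type*} [CommRing R] (a b c : R) :
    M2 ![1 - a*b, a*b*c, a*b - b, a*b - a, a - a*b*c, b - a*b*c, 0, a*b*c - a*b] *
        M12 ![0, -(a*b*c), b, a, a*b*c, a*b*c, -(a*b), -(a*b*c)]
            ![-(a*b), 0, a*b, a*b, a, b, -(a*b), -(a*b)] =
      M12 ![0, -(a*b*c), b, a, a*b*c, a*b*c, -(a*b), -(a*b*c)]
          ![-(a*b), 0, a*b, a*b, a, b, -(a*b), -(a*b)] *
        M1 ![a*b*c, c - a*b*c, b - a*b*c, a - a*b*c,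
             a*b*c - a*c, a*b*c - b*c, a*b*c - a*b, 0] ∧
    M1 ![a*b*c, c - a*b*c, b - a*b*c, a - a*b*c,
         a*b*c - a*c, a*b*c - b*c, a*b*c - a*b, 0] *
        M12 ![0, -(a*b*c), b, a, a*b*c, a*b*c, -(a*b), -(a*b*c)]
            ![-(a*b), 0, a*b, a*b, a, b, -(a*b), -(a*b)] =
      M12 ![0, -(a*b*c), b, a, a*b*c, a*b*c, -(a*b), -(a*b*c)]
          ![-(a*b), 0, a*b, a*b, a, b, -(a*b), -(a*b)] *
        M2 ![1 - a*b, a*b*c, a*b - b, a*b - a, a - a*b*c, b - a*b*c, 0, a*b*c - a*b] := by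
  constructor <;>
    (ext i j
     simp only [M1, M2, M12, Matrix.of_apply, Matrix.mul_apply, Fin.sum_univ_eight]
     fin_cases i <;> fin_cases j <;> simp [vec8_5, vec8_6, vec8_7] <;> try ring)
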